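/- Von Neumann minimax on simplices: for any real m×n matrix M, max over ω ∈ S_m(1) of min over x ∈ S_n(1) of ⟨ω, Mx⟩ equals min over x ∈ S_n(1) of max over ω ∈ S_m(1) of ⟨ω, Mx⟩. -/

import Mathlib

open Matrix

/-! Let `x₀` minimise `g x = maxᵢ (M x)ᵢ` over the simplex, with value `v`. The convex set
`M '' Sₙ` misses the open orthant `{y | ∀ i, yᵢ < v}`, so a hyperplane separates them; its normal
is nonnegative because the orthant is unbounded below in every coordinate, and once normalised it
is a strategy `ω₀` with `v ≤ ⟨ω₀, M x⟩` on `Sₙ`. Then `(ω₀, x₀)` is a saddle point. -/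

section Saddle

variable {α β γ : Type*} [Preorder γ] {S : Set α} {T : Set β} {F : α → β → γ}

theorem isGreatest_isLeast_of_isSaddle {a₀ : α} {b₀ : β} (ha₀ : a₀ ∈ S) (hb₀ : b₀ ∈ T)
    (hmax : ∀ a ∈ S, F a b₀ ≤ F a₀ b₀) (hmin : ∀ b ∈ T, F a₀ b₀ ≤ F a₀ b) :
    IsGreatest {v | ∃ a ∈ S, IsLeast {u | ∃ b ∈ T, u = F a b} v} (F a₀ b₀) ∧
      IsLeast {v | ∃ b ∈ T, IsGreatest {u | ∃ a ∈ S, u = F a b} v} (F a₀ b₀) := by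
  refine ⟨⟨⟨a₀, ha₀, ⟨b₀, hb₀, rfl⟩, ?_⟩, ?_⟩, ⟨⟨b₀, hb₀, ⟨a₀, ha₀, rfl⟩, ?_⟩, ?_⟩⟩
  · rintro _ ⟨b, hb, rfl⟩
    exact hmin b hb
  · rintro v ⟨a, ha, -, hv⟩
    exact (hv ⟨b₀, hb₀, rfl⟩).trans (hmax a ha)
  · rintro _ ⟨a, ha, rfl⟩
    exact hmax a ha
  · rintro v ⟨b, hb, -, hv⟩
    exact (hmin b hb).trans (hv ⟨a₀, ha₀, rfl⟩)

end Saddle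

section Simplex

variable {ι : Type*} [Fintype ι]

theorem dotProduct_le_sup'_of_mem_stdSimplex {ω : ι → ℝ} (hω : ω ∈ stdSimplex ℝ ι)
    (h : (Finset.univ : Finset ι).Nonempty) (y : ι → ℝ) : ω ⬝ᵥ y ≤ Finset.univ.sup' h y :=
  calc ω ⬝ᵥ y ≤ ∑ i, ω i * Finset.univ.sup' h y :=
        Finset.sum_le_sum fun i _ ↦
          mul_le_mul_of_nonneg_left (Finset.le_sup' y (Finset.mem_univ i)) (hω.1 i)
    _ = Finset.univ.sup' h y := by rw [← Finset.sum_mul, hω.2, one_mul]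

theorem dotProduct_const (ω : ι → ℝ) (c : ℝ) : ω ⬝ᵥ (fun _ ↦ c) = (∑ i, ω i) * c :=
  Finset.sum_mul .. |>.symm

variable {ω : ι → ℝ} {u v : ℝ}

theorem nonneg_of_forall_lt_dotProduct_lt (h : ∀ y : ι → ℝ, (∀ i, y i < v) → ω ⬝ᵥ y < u)
    (i : ι) : 0 ≤ ω i := by
  classical
  by_contra! hi
  set y₀ : ι → ℝ := fun _ ↦ v - 1
  have hy₀ : ω ⬝ᵥ y₀ < u := h y₀ fun _ ↦ sub_one_lt v
  -- Pushing the `i`-th coordinate of `y₀` down raises `ω ⬝ᵥ y₀` up to `u`.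
  set t := (u - ω ⬝ᵥ y₀) / -ω i
  have ht : 0 < t := div_pos (sub_pos.2 hy₀) (neg_pos.2 hi)
  have hlt := h (y₀ - Pi.single i t) fun j ↦ by
    rcases eq_or_ne j i with rfl | hj
    · simp only [Pi.sub_apply, Pi.single_eq_same, y₀]
      linarith
    · simp [y₀, hj]
  rw [dotProduct_sub, dotProduct_single] at hlt
  have hωt : ω i * t = ω ⬝ᵥ y₀ - u := by
    have := hi.ne
    simp only [t]
    field_simp
    ring
  linarith

theorem exists_mem_stdSimplex_of_forall_lt_dotProduct_lt
    (h : ∀ y : ι → ℝ, (∀ i, y i < v) → ω ⬝ᵥ y < u) {a : ι → ℝ} (ha : u ≤ ω ⬝ᵥ a) :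
    ∃ ω' ∈ stdSimplex ℝ ι, ∀ b, u ≤ ω ⬝ᵥ b → v ≤ ω' ⬝ᵥ b := by
  have hω : 0 ≤ ω := nonneg_of_forall_lt_dotProduct_lt h
  have hconst (c : ℝ) (hc : c < v) : (∑ i, ω i) * c < u := by
    simpa only [dotProduct_const] using h _ fun _ ↦ hc
  have hS : 0 < ∑ i, ω i := by
    refine (Finset.sum_nonneg fun i _ ↦ hω i).lt_of_ne fun hS ↦ ?_
    have hω0 : ω = 0 := funext fun i ↦
      (Finset.sum_eq_zero_iff_of_nonneg fun i _ ↦ hω i).1 hS.symm i (Finset.mem_univ i)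
    have hu : 0 < u := by simpa only [← hS, zero_mul] using hconst (v - 1) (sub_one_lt v)
    rw [hω0, zero_dotProduct] at ha
    linarith
  have hvu : v ≤ u / ∑ i, ω i :=
    le_of_forall_lt fun c hc ↦ (lt_div_iff₀ hS).2 (mul_comm c _ ▸ hconst c hc)
  refine ⟨(∑ i, ω i)⁻¹ • ω, ⟨fun i ↦ ?_, ?_⟩, fun b hb ↦ ?_⟩
  · exact mul_nonneg (inv_nonneg.2 hS.le) (hω i)
  · simp only [Pi.smul_apply, smul_eq_mul, ← Finset.mul_sum, inv_mul_cancel₀ hS.ne']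
  · rw [smul_dotProduct, smul_eq_mul, inv_mul_eq_div]
    exact hvu.trans (div_le_div_of_nonneg_right hb hS.le)

theorem Convex.exists_mem_stdSimplex_forall_le_dotProduct {A : Set (ι → ℝ)} (hAc : Convex ℝ A)
    (hAne : A.Nonempty) (hA : ∀ a ∈ A, ∃ i, v ≤ a i) :
    ∃ ω ∈ stdSimplex ℝ ι, ∀ a ∈ A, v ≤ ω ⬝ᵥ a := by
  classical
  set B : Set (ι → ℝ) := Set.univ.pi fun _ ↦ Set.Iio v
  have hB : Disjoint B A := Set.disjoint_left.2 fun y hy hyA ↦ by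
    obtain ⟨i, hi⟩ := hA y hyA
    exact (hi.trans_lt (hy i (Set.mem_univ i))).false
  obtain ⟨f, u, hfB, hfA⟩ := geometric_hahn_banach_open (convex_pi fun _ _ ↦ convex_Iio v)
    (isOpen_set_pi Set.finite_univ fun _ _ ↦ isOpen_Iio) hAc hB
  set ω : ι → ℝ := fun i ↦ f fun j ↦ if i = j then 1 else 0
  have hf (y : ι → ℝ) : f y = ω ⬝ᵥ y := by
    rw [← ContinuousLinearMap.coe_coe, LinearMap.pi_apply_eq_sum_univ]
    exact Finset.sum_congr rfl fun i _ ↦ mul_comm _ _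
  obtain ⟨a, ha⟩ := hAne
  obtain ⟨ω', hω', hle⟩ := exists_mem_stdSimplex_of_forall_lt_dotProduct_lt
    (fun y hy ↦ hf y ▸ hfB y fun i _ ↦ hy i) (hf a ▸ hfA a ha)
  exact ⟨ω', hω', fun b hb ↦ hle b (hf b ▸ hfA b hb)⟩

end Simplex

/-- Von Neumann minimax on simplices: for any real `m × n` matrix `M`,
`max_{ω ∈ S_m} min_{x ∈ S_n} ⟨ω, Mx⟩ = min_{x ∈ S_n} max_{ω ∈ S_m} ⟨ω, Mx⟩`,
with both the outer max/min and inner min/max attained. -/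
theorem stmt_14 {m n : ℕ} (hm : 0 < m) (hn : 0 < n) (M : Matrix (Fin m) (Fin n) ℝ) :
    ∃ C : ℝ,
      IsGreatest {v : ℝ | ∃ ω ∈ stdSimplex ℝ (Fin m),
        IsLeast {u : ℝ | ∃ x ∈ stdSimplex ℝ (Fin n),
          u = ∑ i, ω i * M.mulVec x i} v} C ∧
      IsLeast {v : ℝ | ∃ x ∈ stdSimplex ℝ (Fin n),
        IsGreatest {u : ℝ | ∃ ω ∈ stdSimplex ℝ (Fin m),
          u = ∑ i, ω i * M.mulVec x i} v} C := by
  have : Nonempty (Fin m) := Fin.pos_iff_nonempty.mp hm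
  have : Nonempty (Fin n) := Fin.pos_iff_nonempty.mp hn
  set g : (Fin n → ℝ) → ℝ := fun x ↦ Finset.univ.sup' Finset.univ_nonempty (M *ᵥ x)
  have hg : Continuous g := Continuous.finset_sup'_apply _ fun i _ ↦
    (continuous_apply i).comp (continuous_const.matrix_mulVec continuous_id)
  obtain ⟨x₀, hx₀, hx₀min⟩ := (isCompact_stdSimplex ℝ (Fin n)).exists_isMinOn
    ⟨_, single_mem_stdSimplex ℝ (Classical.arbitrary _)⟩ hg.continuousOn
  have hA : Convex ℝ ((M *ᵥ ·) '' stdSimplex ℝ (Fin n)) :=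
    (convex_stdSimplex ℝ (Fin n)).linear_image M.mulVecLin
  obtain ⟨ω₀, hω₀, hω₀le⟩ := hA.exists_mem_stdSimplex_forall_le_dotProduct (v := g x₀)
    ⟨_, x₀, hx₀, rfl⟩ <| by
      rintro _ ⟨x, hx, rfl⟩
      obtain ⟨i, -, hi⟩ := Finset.exists_mem_eq_sup' Finset.univ_nonempty (M *ᵥ x)
      exact ⟨i, (hx₀min hx).trans_eq hi⟩
  have hup (ω) (hω : ω ∈ stdSimplex ℝ (Fin m)) : ω ⬝ᵥ M *ᵥ x₀ ≤ g x₀ :=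
    dotProduct_le_sup'_of_mem_stdSimplex hω _ _
  have hlow (x) (hx : x ∈ stdSimplex ℝ (Fin n)) : g x₀ ≤ ω₀ ⬝ᵥ M *ᵥ x :=
    hω₀le _ ⟨x, hx, rfl⟩
  exact ⟨_, isGreatest_isLeast_of_isSaddle (F := fun ω x ↦ ω ⬝ᵥ M *ᵥ x) hω₀ hx₀
    (fun ω hω ↦ (hup ω hω).trans (hlow x₀ hx₀)) fun x hx ↦ (hup ω₀ hω₀).trans (hlow x hx)⟩
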